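/- Define Θ_{i j̄} = Φ_i Φ_{j̄}/Φ² and ĝ_{i j̄} = Φ_{i j̄}/Φ. Then the trace of Θ with respect to ĝ equals 1, i.e., Σ_{i,j} ĝ^{i j̄} Θ_{i j̄} = 1, where ĝ^{i j̄} is the inverse matrix of ĝ. -/

import Mathlib

/-!
Write `u = (Φ_i/Φ)` and `d_i = Φ^(-2k_i)/Z`, so that `Θ = u u*` and `ĝ = diag d` plus a
rank-two correction built from `u` and `k ∘ u`. Then `tr(ĝ⁻¹ Θ) = u* ĝ⁻¹ u`, and the vector
`w_i = 2 k_i u_i / d_i` (that is, `w = 2 k ∘ z̄`) solves `ĝ w = u`: the definition of `Z`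
says exactly that `Σ k_i |u_i|² / d_i = 1/2`, which gives both `ĝ w = u` and `u* w = 1`.
The same identity shows that `ĝ` has trivial kernel, so `ĝ⁻¹ u = w`.
-/

/-- `Φᵢ = z̄ᵢ Φ^(1−2kᵢ)/Z`. -/
noncomputable def phiD (k1 k2 Φv Zv : ℝ) (z : ℂ × ℂ) (i : Fin 2) : ℂ :=
  (starRingEnd ℂ) (if i = 0 then z.1 else z.2)
    * ((Φv ^ (1 - 2 * (if i = 0 then k1 else k2)) : ℝ) : ℂ) / ((Zv : ℝ) : ℂ)

/-- The explicit formula for the mixed Wirtinger second derivatives `Φ_{i j̄}`. -/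
noncomputable def hessEntry (k1 k2 Φv Zv : ℝ) (z : ℂ × ℂ) (i j : Fin 2) : ℂ :=
  (if i = j then ((Φv ^ (1 - 2 * (if i = 0 then k1 else k2)) / Zv : ℝ) : ℂ) else 0)
    + (((1 - 2 * (if i = 0 then k1 else k2) - 2 * (if j = 0 then k1 else k2)
        + 4 / Zv * (k1 ^ 2 * ‖z.1‖ ^ 2 * Φv ^ (-(2 * k1))
            + k2 ^ 2 * ‖z.2‖ ^ 2 * Φv ^ (-(2 * k2)))) : ℝ) : ℂ)
      * phiD k1 k2 Φv Zv z i * (starRingEnd ℂ) (phiD k1 k2 Φv Zv z j) / ((Φv : ℝ) : ℂ)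

open Matrix Finset

noncomputable section

section HatMetric

variable {ι : Type*} [Fintype ι] (d k : ι → ℝ) (u : ι → ℂ)

def weightedMoment (n : ℕ) : ℝ := ∑ i, k i ^ n * ‖u i‖ ^ 2 / d i

lemma sum_pow_mul_star_mul_affine_eq (n : ℕ) (a b : ℂ) :
    ∑ i, (k i : ℂ) ^ n * star (u i) * ((a * k i + b) * u i / d i)
      = a * weightedMoment d k u (n + 1) + b * weightedMoment d k u n := by
  simp only [weightedMoment]
  push_cast
  rw [mul_sum, mul_sum, ← sum_add_distrib]
  refine sum_congr rfl fun i _ => ?_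
  rw [← Complex.conj_mul' (u i)]
  simp only [Complex.star_def]
  ring

lemma weightedMoment_zero_pos (hd : ∀ i, 0 < d i) (hq : weightedMoment d k u 1 ≠ 0) :
    0 < weightedMoment d k u 0 := by
  have hnonneg : ∀ i ∈ univ, 0 ≤ k i ^ 0 * ‖u i‖ ^ 2 / d i := fun i _ => by
    have := hd i; positivity
  refine (sum_nonneg hnonneg).lt_of_ne fun h => hq ?_
  have hzero := (sum_eq_zero_iff_of_nonneg hnonneg).1 h.symm
  refine sum_eq_zero fun i hi => ?_
  have := hzero i hi
  rw [pow_zero, one_mul] at this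
  rw [pow_one, mul_div_assoc, this, mul_zero]

variable [DecidableEq ι]

/-- The paper's `ĝ`; here `weightedMoment d k u 2` is the term `S / Z` of `hessEntry`, where
`S = k₁² |z₁|² Φ^(-2k₁) + k₂² |z₂|² Φ^(-2k₂)`. -/
def hatMetric : Matrix ι ι ℂ :=
  diagonal (fun i => (d i : ℂ))
    + of fun i j =>
      ((1 + 4 * weightedMoment d k u 2 - 2 * k i - 2 * k j : ℝ) : ℂ) * u i * star (u j)

lemma hatMetric_mulVec_apply (ξ : ι → ℂ) (i : ι) :
    (hatMetric d k u *ᵥ ξ) i = d i * ξ i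
      + u i * ((1 + 4 * weightedMoment d k u 2 - 2 * k i) * ∑ j, star (u j) * ξ j
        - 2 * ∑ j, (k j : ℂ) * star (u j) * ξ j) := by
  rw [hatMetric, add_mulVec, Pi.add_apply, mulVec_diagonal]
  simp only [mulVec, dotProduct, of_apply, mul_sum, ← sum_sub_distrib]
  push_cast
  congr 1
  refine sum_congr rfl fun j _ => ?_
  ring

lemma hatMetric_det_ne_zero (hd : ∀ i, 0 < d i) (hq : weightedMoment d k u 1 = 1 / 2) :
    (hatMetric d k u).det ≠ 0 := by
  rw [Ne, ← exists_mulVec_eq_zero_iff]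
  rintro ⟨ξ, hξ, hgξ⟩
  apply hξ
  set a := ∑ j, star (u j) * ξ j
  set b := ∑ j, (k j : ℂ) * star (u j) * ξ j
  set m := (1 + 4 * weightedMoment d k u 2) * a - 2 * b with hm_def
  -- pairing the kernel vector with `ū` and with `k ∘ ū` forces `m = 0` and then `a = 0`
  have hξ_eq : ∀ i, ξ i = (2 * a * k i + -m) * u i / d i := fun i => by
    have h := hatMetric_mulVec_apply d k u ξ i
    rw [hgξ, Pi.zero_apply] at h
    rw [eq_div_iff (by exact_mod_cast (hd i).ne')]
    linear_combination -h
  have ha : a = 2 * a * weightedMoment d k u 1 + -m * weightedMoment d k u 0 := by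
    rw [← sum_pow_mul_star_mul_affine_eq]
    exact sum_congr rfl fun i _ => by rw [← hξ_eq, pow_zero, one_mul]
  have hb : b = 2 * a * weightedMoment d k u 2 + -m * weightedMoment d k u 1 := by
    rw [← sum_pow_mul_star_mul_affine_eq]
    exact sum_congr rfl fun i _ => by rw [← hξ_eq, pow_one]
  have hp : (weightedMoment d k u 0 : ℂ) ≠ 0 := by
    exact_mod_cast (weightedMoment_zero_pos d k u hd (by rw [hq]; norm_num)).ne'
  rw [hq] at ha hb
  push_cast at ha hb
  have hm : m = 0 := by
    have : m * weightedMoment d k u 0 = 0 := by linear_combination ha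
    simpa [hp] using this
  have ha0 : a = 0 := by linear_combination -hm_def + 2 * hb
  funext i
  rw [hξ_eq, ha0, hm]
  simp

theorem trace_inv_hatMetric_mul_vecMulVec (hd : ∀ i, 0 < d i)
    (hq : weightedMoment d k u 1 = 1 / 2) :
    ((hatMetric d k u)⁻¹ * vecMulVec u (star u)).trace = 1 := by
  set w : ι → ℂ := fun i => 2 * k i * u i / d i
  have hsum (n : ℕ) :
      ∑ j, (k j : ℂ) ^ n * star (u j) * w j = 2 * weightedMoment d k u (n + 1) := by
    rw [← add_zero (2 * _), ← zero_mul (weightedMoment d k u n : ℂ),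
      ← sum_pow_mul_star_mul_affine_eq]
    simp [w]
  have hw : ∑ j, star (u j) * w j = 1 := by
    simpa [hq] using hsum 0
  have hgw : hatMetric d k u *ᵥ w = u := by
    funext i
    have hkw : ∑ j, (k j : ℂ) * star (u j) * w j = 2 * weightedMoment d k u 2 := by
      simpa using hsum 1
    have hdi : (d i : ℂ) ≠ 0 := by exact_mod_cast (hd i).ne'
    rw [hatMetric_mulVec_apply, hw, hkw, mul_div_cancel₀ _ hdi]
    ring
  let := (hatMetric d k u).invertibleOfIsUnitDet
    (isUnit_iff_ne_zero.2 (hatMetric_det_ne_zero d k u hd hq))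
  rw [mul_vecMulVec, trace_vecMulVec, inv_mulVec_eq_vec hgw.symm, dotProduct_comm]
  exact hw

end HatMetric

def weightExponent (k1 k2 : ℝ) (i : Fin 2) : ℝ := if i = 0 then k1 else k2

def hatMetricDiag (k1 k2 Φv Zv : ℝ) (i : Fin 2) : ℝ :=
  Φv ^ (1 - 2 * weightExponent k1 k2 i) / Zv / Φv

def dlogPhi (k1 k2 Φv Zv : ℝ) (z : ℂ × ℂ) (i : Fin 2) : ℂ := phiD k1 k2 Φv Zv z i / Φv

section Specialization

variable {k1 k2 Φv Zv : ℝ} (z : ℂ × ℂ)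

lemma norm_dlogPhi_sq_div_hatMetricDiag (hΦ : 0 < Φv) (hZ : 0 < Zv) (i : Fin 2) :
    ‖dlogPhi k1 k2 Φv Zv z i‖ ^ 2 / hatMetricDiag k1 k2 Φv Zv i
      = ‖if i = 0 then z.1 else z.2‖ ^ 2 * Φv ^ (-(2 * weightExponent k1 k2 i)) / Zv := by
  simp only [dlogPhi, hatMetricDiag, phiD]
  generalize (if i = 0 then z.1 else z.2) = w
  rw [show (if i = 0 then k1 else k2) = weightExponent k1 k2 i from rfl]
  generalize weightExponent k1 k2 i = κ
  have hP : Φv ^ (1 - 2 * κ) = Φv * Φv ^ (-(2 * κ)) := by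
    rw [sub_eq_add_neg, Real.rpow_add hΦ, Real.rpow_one]
  have hA := Real.rpow_pos_of_pos hΦ (-(2 * κ))
  rw [norm_div, norm_div, norm_mul, Complex.norm_conj, Complex.norm_real, Complex.norm_real,
    Complex.norm_real, Real.norm_of_nonneg hΦ.le, Real.norm_of_nonneg hZ.le,
    Real.norm_of_nonneg (Real.rpow_nonneg hΦ.le _), hP]
  field_simp

lemma weightedMoment_dlogPhi (hΦ : 0 < Φv) (hZ : 0 < Zv) (n : ℕ) :
    weightedMoment (hatMetricDiag k1 k2 Φv Zv) (weightExponent k1 k2) (dlogPhi k1 k2 Φv Zv z) n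
      = (k1 ^ n * ‖z.1‖ ^ 2 * Φv ^ (-(2 * k1)) + k2 ^ n * ‖z.2‖ ^ 2 * Φv ^ (-(2 * k2))) / Zv := by
  simp only [weightedMoment, Fin.sum_univ_two, mul_div_assoc,
    norm_dlogPhi_sq_div_hatMetricDiag z hΦ hZ]
  simp only [weightExponent, Fin.isValue, ↓reduceIte, one_ne_zero]
  ring

lemma hessEntry_div_eq_hatMetric (hΦ : 0 < Φv) (hZ : 0 < Zv) :
    (of fun i j : Fin 2 => hessEntry k1 k2 Φv Zv z i j / ((Φv : ℝ) : ℂ))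
      = hatMetric (hatMetricDiag k1 k2 Φv Zv) (weightExponent k1 k2) (dlogPhi k1 k2 Φv Zv z) := by
  ext i j
  simp only [hatMetric, hessEntry, Matrix.add_apply, diagonal_apply, of_apply,
    weightedMoment_dlogPhi z hΦ hZ]
  simp only [hatMetricDiag, dlogPhi, weightExponent, star_div₀, Complex.star_def,
    Complex.conj_ofReal]
  split_ifs <;> push_cast <;> ring

lemma phiD_mul_conj_div_sq_eq_vecMulVec :
    (of fun i j : Fin 2 =>
      phiD k1 k2 Φv Zv z i * (starRingEnd ℂ) (phiD k1 k2 Φv Zv z j) / ((Φv : ℝ) : ℂ) ^ 2)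
      = vecMulVec (dlogPhi k1 k2 Φv Zv z) (star (dlogPhi k1 k2 Φv Zv z)) := by
  ext i j
  simp only [of_apply, vecMulVec_apply, dlogPhi, Pi.star_apply, star_div₀, Complex.star_def,
    Complex.conj_ofReal]
  ring

end Specialization

end

theorem stmt_9_general (k1 k2 : ℝ) (hk1 : 0 < k1) (hk12 : k1 ≤ k2)
    (z : ℂ × ℂ) (Φv : ℝ) (hΦ : 0 < Φv)
    (heq : ‖z.1‖ ^ 2 * Φv ^ (-(2 * k1)) + ‖z.2‖ ^ 2 * Φv ^ (-(2 * k2)) = 1)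
    (Zv : ℝ)
    (hZ : Zv = 2 * (k1 * ‖z.1‖ ^ 2 * Φv ^ (-(2 * k1))
        + k2 * ‖z.2‖ ^ 2 * Φv ^ (-(2 * k2)))) :
    ((Matrix.of fun i j : Fin 2 => hessEntry k1 k2 Φv Zv z i j / ((Φv : ℝ) : ℂ))⁻¹
      * Matrix.of fun i j : Fin 2 =>
          phiD k1 k2 Φv Zv z i * (starRingEnd ℂ) (phiD k1 k2 Φv Zv z j) / ((Φv : ℝ) : ℂ) ^ 2).trace
      = 1 := by
  have hZ_pos : 0 < Zv := by
    have : Zv = 2 * k1 + 2 * ((k2 - k1) * ‖z.2‖ ^ 2 * Φv ^ (-(2 * k2))) := by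
      rw [hZ]; linear_combination 2 * k1 * heq
    rw [this]; positivity
  rw [hessEntry_div_eq_hatMetric z hΦ hZ_pos, phiD_mul_conj_div_sq_eq_vecMulVec]
  refine trace_inv_hatMetric_mul_vecMulVec _ _ _ (fun i => by unfold hatMetricDiag; positivity) ?_
  rw [weightedMoment_dlogPhi z hΦ hZ_pos, div_eq_iff hZ_pos.ne', hZ]
  ring

/-- With `Θ_{i j̄} = Φᵢ Φ_{j̄}/Φ²` and `ĝ_{i j̄} = Φ_{i j̄}/Φ`, the trace of `Θ` with
respect to `ĝ` equals 1, i.e. `Σ_{i,j} ĝ^{i j̄} Θ_{i j̄} = tr(ĝ⁻¹ Θ) = 1`. -/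
theorem stmt_9 (k1 k2 : ℝ) (hk1 : 0 < k1) (hk12 : k1 ≤ k2) (hsum : k1 + k2 = 1)
    (z : ℂ × ℂ) (hz : z ≠ 0) (Φv : ℝ) (hΦ : 0 < Φv)
    (heq : ‖z.1‖ ^ 2 * Φv ^ (-(2 * k1)) + ‖z.2‖ ^ 2 * Φv ^ (-(2 * k2)) = 1)
    (Zv : ℝ)
    (hZ : Zv = 2 * (k1 * ‖z.1‖ ^ 2 * Φv ^ (-(2 * k1))
        + k2 * ‖z.2‖ ^ 2 * Φv ^ (-(2 * k2)))) :
    ((Matrix.of fun i j : Fin 2 => hessEntry k1 k2 Φv Zv z i j / ((Φv : ℝ) : ℂ))⁻¹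
      * Matrix.of fun i j : Fin 2 =>
          phiD k1 k2 Φv Zv z i * (starRingEnd ℂ) (phiD k1 k2 Φv Zv z j) / ((Φv : ℝ) : ℂ) ^ 2).trace
      = 1 :=
  stmt_9_general k1 k2 hk1 hk12 z Φv hΦ heq Zv hZ
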